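/- arXiv:2011.11146 — 3 statements merged into one kernel-verified Lean document; each statement's English description precedes it below -/
import Mathlib

section
/- Let X be a real-valued random variable with continuous distribution function F. Then the lens depth of a point x ∈ ℝ satisfies LD(x) = 2 F(x)(1 − F(x)), where LD(x) = P(x ∈ A(X1,X2)) for X1, X2 independent copies of X and A(a,b) = [min(a,b), max(a,b)] extended symmetrically: A(a,b) = B(a,|a−b|) ∩ B(b,|a−b|). -/
open Metric Set MeasureTheory Filter Topology

/-- The lens `A(a,b) = B(a, d(a,b)) ∩ B(b, d(a,b))`. -/
def lens {M : Type*} [MetricSpace M] (a b : M) : Set M :=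
  closedBall a (dist a b) ∩ closedBall b (dist a b)

lemma atom_zero (μ : Measure ℝ) [IsProbabilityMeasure μ]
    (F : ℝ → ℝ) (hF : ∀ x, F x = (μ (Set.Iic x)).toReal) (hFcont : Continuous F) (x : ℝ) :
    μ {x} = 0 := by
  have hUnion : (⋃ n : ℕ, Iic (x - 1/(n+1))) = Iio x := by
    ext y
    simp only [mem_iUnion, mem_Iic, mem_Iio]
    constructor
    · rintro ⟨n, hn⟩
      have : (0:ℝ) < 1/(n+1) := by positivity
      linarith
    · intro hy
      obtain ⟨n, hn⟩ := exists_nat_one_div_lt (show (0:ℝ) < x - y by linarith)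
      exact ⟨n, by linarith⟩
  have hmono : Monotone (fun n : ℕ => Iic (x - 1/(n+1))) := by
    intro m n hmn
    apply Iic_subset_Iic.2
    have : (1:ℝ)/(n+1) ≤ 1/(m+1) := by
      apply one_div_le_one_div_of_le (by positivity)
      exact_mod_cast by omega
    linarith
  have h1 : Tendsto (fun n : ℕ => μ (Iic (x - 1/(n+1)))) atTop (𝓝 (μ (Iio x))) := by
    rw [← hUnion]
    exact tendsto_measure_iUnion_atTop hmono
  have h2 : Tendsto (fun n : ℕ => (μ (Iic (x - 1/(n+1)))).toReal) atTop (𝓝 ((μ (Iio x)).toReal)) :=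
    (ENNReal.tendsto_toReal (measure_ne_top μ _)).comp h1
  have h3 : Tendsto (fun n : ℕ => F (x - 1/(n+1))) atTop (𝓝 (F x)) := by
    apply (hFcont.tendsto x).comp
    have : Tendsto (fun n : ℕ => (1:ℝ)/(n+1)) atTop (𝓝 0) := tendsto_one_div_add_atTop_nhds_zero_nat
    have := (tendsto_const_nhds (x := x) (f := atTop (α := ℕ))).sub this
    simpa using this
  have hkey : (μ (Iio x)).toReal = F x := by
    have : (fun n : ℕ => (μ (Iic (x - 1/(n+1)))).toReal) = fun n : ℕ => F (x - 1/(n+1)) := by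
      funext n; rw [hF]
    rw [this] at h2
    exact tendsto_nhds_unique h2 h3
  have hsplit : μ (Iic x) = μ (Iio x) + μ {x} := by
    rw [← measure_union (by simp) (measurableSet_singleton x)]
    congr 1
    ext y; simp [le_iff_lt_or_eq]
  have hIic : (μ (Iic x)).toReal = F x := (hF x).symm
  have h4 : (μ (Iio x)).toReal + (μ {x}).toReal = (μ (Iic x)).toReal := by
    rw [hsplit, ENNReal.toReal_add (measure_ne_top μ _) (measure_ne_top μ _)]
  have : (μ {x}).toReal = 0 := by rw [hkey, hIic] at h4; linarith
  exact (ENNReal.toReal_eq_zero_iff _).1 this |>.resolve_right (measure_ne_top μ _)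

lemma lens_set_eq (x : ℝ) :
    {p : ℝ × ℝ | x ∈ lens p.1 p.2} = (Iic x ×ˢ Ici x) ∪ (Ici x ×ˢ Iic x) := by
  ext ⟨a, b⟩
  simp only [lens, mem_setOf_eq, mem_inter_iff, mem_closedBall, Real.dist_eq, mem_union,
    mem_prod, mem_Iic, mem_Ici]
  rcases le_total a b with hab | hab
  · rw [abs_of_nonpos (by linarith : a - b ≤ 0), abs_le, abs_le]
    constructor
    · rintro ⟨⟨h1, h2⟩, h3, h4⟩
      left; exact ⟨by linarith, by linarith⟩
    · rintro (⟨h1, h2⟩ | ⟨h1, h2⟩) <;>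
        exact ⟨⟨by linarith, by linarith⟩, by linarith, by linarith⟩
  · rw [abs_of_nonneg (by linarith : 0 ≤ a - b), abs_le, abs_le]
    constructor
    · rintro ⟨⟨h1, h2⟩, h3, h4⟩
      right; exact ⟨by linarith, by linarith⟩
    · rintro (⟨h1, h2⟩ | ⟨h1, h2⟩) <;>
        exact ⟨⟨by linarith, by linarith⟩, by linarith, by linarith⟩

/-- For a real random variable with continuous CDF `F`,
the lens depth is `LD(x) = 2 F(x)(1 - F(x))`. -/
theorem stmt3 (μ : Measure ℝ) [IsProbabilityMeasure μ]
    (F : ℝ → ℝ) (hF : ∀ x, F x = (μ (Set.Iic x)).toReal) (hFcont : Continuous F) :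
    ∀ x : ℝ, ((μ.prod μ) {p : ℝ × ℝ | x ∈ lens p.1 p.2}).toReal = 2 * F x * (1 - F x) := by
  intro x
  have hatom := atom_zero μ F hF hFcont x
  rw [lens_set_eq x]
  have hinter : (μ.prod μ) ((Iic x ×ˢ Ici x) ∩ (Ici x ×ˢ Iic x)) = 0 := by
    have hsub : (Iic x ×ˢ Ici x) ∩ (Ici x ×ˢ Iic x) ⊆ ({x} : Set ℝ) ×ˢ (univ : Set ℝ) := by
      rintro ⟨a, b⟩ ⟨⟨h1, h2⟩, ⟨h3, h4⟩⟩
      simp only [mem_prod, mem_singleton_iff, mem_univ, and_true]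
      exact le_antisymm h1 h3
    refine measure_mono_null hsub ?_
    rw [Measure.prod_prod, hatom, zero_mul]
  have hIciset : Ici x = Ioi x ∪ {x} := by
    ext y
    simp only [mem_Ici, mem_union, mem_Ioi, mem_singleton_iff]
    constructor
    · intro h
      rcases eq_or_lt_of_le h with h | h
      · right; exact h.symm
      · left; exact h
    · rintro (h | h)
      exacts [h.le, h.ge]
  have hIci' : μ (Ici x) = 1 - μ (Iic x) := by
    rw [hIciset, measure_union (Set.disjoint_singleton_right.2 (by simp))
      (measurableSet_singleton x), hatom, add_zero, ← compl_Iic,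
      measure_compl measurableSet_Iic (measure_ne_top μ _), measure_univ]
  have hunion : (μ.prod μ) ((Iic x ×ˢ Ici x) ∪ (Ici x ×ˢ Iic x)) =
      μ (Iic x) * μ (Ici x) + μ (Ici x) * μ (Iic x) := by
    rw [← Measure.prod_prod, ← Measure.prod_prod (s := Ici x)]
    rw [← measure_union_add_inter _ ((measurableSet_Ici.prod measurableSet_Iic))]
    rw [hinter, add_zero]
  rw [hunion]
  have h1 : μ (Iic x) ≠ ⊤ := measure_ne_top μ _
  have h2 : μ (Ici x) ≠ ⊤ := measure_ne_top μ _
  rw [ENNReal.toReal_add (ENNReal.mul_ne_top h1 h2) (ENNReal.mul_ne_top h2 h1),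
    ENNReal.toReal_mul, ENNReal.toReal_mul]
  have hFx : (μ (Iic x)).toReal = F x := (hF x).symm
  have hIcix : (μ (Ici x)).toReal = 1 - F x := by
    rw [hIci', ENNReal.toReal_sub_of_le (prob_le_one) (by simp), hFx]
    simp
  rw [hFx, hIcix]; ring
end

section
/- Let f_n, f : M → ℝ with f continuous, K ⊆ M compact, and suppose sup_{x∈K} |f_n(x) − f(x)| → 0. Let λ ∈ ℝ be such that {f ≥ λ} ∩ K ⊆ closure({f > λ} ∩ K) and {f > λ} ∩ K is nonempty. Then for any ε > 0 there is N such that for n ≥ N, {f ≥ λ} ∩ K is contained in the ε-neighborhood of {f_n ≥ λ} ∩ K. -/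
open Metric Set

/-- Inner consistency of plug-in level sets: under uniform convergence on a compact `K`,
if `{f ≥ λ} ∩ K ⊆ closure({f > λ} ∩ K)` and `{f > λ} ∩ K ≠ ∅`, then eventually
`{f ≥ λ} ∩ K` is contained in the `ε`-neighborhood of `{fₙ ≥ λ} ∩ K`. -/
theorem stmt11 {M : Type*} [MetricSpace M] (f : M → ℝ) (fn : ℕ → M → ℝ)
    (hf : Continuous f) (K : Set M) (hK : IsCompact K)
    (hconv : ∀ ε > 0, ∃ N, ∀ n ≥ N, ∀ x ∈ K, |fn n x - f x| < ε)
    (lam : ℝ)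
    (hlevel : {x | f x ≥ lam} ∩ K ⊆ closure ({x | f x > lam} ∩ K))
    (hne : ({x | f x > lam} ∩ K).Nonempty) :
    ∀ ε > 0, ∃ N, ∀ n ≥ N, ∀ x ∈ {x | f x ≥ lam} ∩ K,
      infDist x ({y | fn n y ≥ lam} ∩ K) < ε := by
  intro ε hε
  set S : Set M := {x | f x > lam} ∩ K with hS
  set A : Set M := {x | f x ≥ lam} ∩ K with hA
  have hAcomp : IsCompact A := hK.inter_left (isClosed_le continuous_const hf)
  rcases A.eq_empty_or_nonempty with hAe | hAne
  · exact ⟨0, fun n _ x hx => absurd hx (by simp [hAe])⟩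
  · have hcover : A ⊆ ⋃ y : S, ball (y : M) (ε / 2) := by
      intro x hx
      have hxc := hlevel hx
      rcases Metric.mem_closure_iff.mp hxc (ε / 2) (by linarith) with ⟨y, hyS, hxy⟩
      exact mem_iUnion.mpr ⟨⟨y, hyS⟩, by simpa [mem_ball, dist_comm] using hxy⟩
    obtain ⟨t, ht⟩ := hAcomp.elim_finite_subcover (fun y : S => ball (y : M) (ε / 2))
      (fun _ => isOpen_ball) hcover
    have htne : t.Nonempty := by
      obtain ⟨x, hx⟩ := hAne
      rcases mem_iUnion₂.mp (ht hx) with ⟨y, hyt, _⟩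
      exact ⟨y, hyt⟩
    set δ : ℝ := t.inf' htne (fun y => f (y : M) - lam) with hδ
    have hδpos : 0 < δ := by
      rw [hδ, Finset.lt_inf'_iff]
      intro y _
      have := y.2.1
      simp only [mem_setOf_eq] at this
      linarith
    obtain ⟨N, hN⟩ := hconv δ hδpos
    refine ⟨N, fun n hn x hx => ?_⟩
    rcases mem_iUnion₂.mp (ht hx) with ⟨y, hyt, hxy⟩
    have hyK : (y : M) ∈ K := y.2.2
    have hy1 : |fn n y - f y| < δ := hN n hn y hyK
    have hy2 : δ ≤ f (y : M) - lam := Finset.inf'_le _ hyt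
    have hymem : (y : M) ∈ {y | fn n y ≥ lam} ∩ K := by
      refine ⟨?_, hyK⟩
      have := abs_lt.mp hy1
      simp only [mem_setOf_eq]
      linarith [this.1]
    have : infDist x ({y | fn n y ≥ lam} ∩ K) ≤ dist x y := infDist_le_dist_of_mem hymem
    have hxb : dist x y < ε / 2 := mem_ball.mp hxy
    linarith
end

section
/- Let X and Y be real random variables with continuous strictly increasing CDFs F and G, and suppose X is more disperse than Y in the dispersive order: F⁻¹(β) − F⁻¹(α) ≥ G⁻¹(β) − G⁻¹(α) for all 0 < α < β < 1. Then for every λ ∈ (0,1/2), the Lebesgue measure of the lens-depth level set {LD_X ≥ λ} is at least that of {LD_Y ≥ λ}. -/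
open Set MeasureTheory

lemma lens_level_eq_Icc (F Finv : ℝ → ℝ) (hFmono : StrictMono F)
    (hFrange : ∀ x, F x ∈ Set.Ioo (0 : ℝ) 1)
    (hFinv_right : ∀ y ∈ Set.Ioo (0 : ℝ) 1, F (Finv y) = y)
    (lam : ℝ) (hlam : lam ∈ Set.Ioo (0 : ℝ) (1 / 2)) :
    {x : ℝ | 2 * F x * (1 - F x) ≥ lam} =
      Set.Icc (Finv ((1 - Real.sqrt (1 - 2 * lam)) / 2))
        (Finv ((1 + Real.sqrt (1 - 2 * lam)) / 2)) := by
  obtain ⟨hl0, hl2⟩ := hlam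
  set s := Real.sqrt (1 - 2 * lam) with hs
  have hs0 : 0 < s := Real.sqrt_pos.mpr (by linarith)
  have hs1 : s < 1 := by
    have h := Real.sqrt_lt_sqrt (by linarith) (show (1:ℝ) - 2 * lam < 1 by linarith)
    simpa [hs, Real.sqrt_one] using h
  have hs2 : s ^ 2 = 1 - 2 * lam := Real.sq_sqrt (by linarith)
  have ha : (1 - s) / 2 ∈ Set.Ioo (0 : ℝ) 1 := ⟨by linarith, by linarith⟩
  have hb : (1 + s) / 2 ∈ Set.Ioo (0 : ℝ) 1 := ⟨by linarith, by linarith⟩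
  ext x
  have hFa := hFinv_right _ ha
  have hFb := hFinv_right _ hb
  simp only [Set.mem_setOf_eq, Set.mem_Icc]
  constructor
  · intro h
    constructor
    · rw [← hFmono.le_iff_le, hFa]
      nlinarith [hFrange x |>.1, hFrange x |>.2]
    · rw [← hFmono.le_iff_le, hFb]
      nlinarith [hFrange x |>.1, hFrange x |>.2]
  · rintro ⟨h1, h2⟩
    rw [← hFmono.le_iff_le, hFa] at h1
    rw [← hFmono.le_iff_le, hFb] at h2
    nlinarith

/-- If `X` is more disperse than `Y` in the dispersive order (quantile-spread order),
then for every `λ ∈ (0,1/2)` the Lebesgue measure of the lens-depth level set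
`{LD_X ≥ λ}` is at least that of `{LD_Y ≥ λ}`, where `LD_F(x) = 2F(x)(1-F(x))`. -/
theorem stmt16 (F G Finv Ginv : ℝ → ℝ)
    (hFcont : Continuous F) (hFmono : StrictMono F) (hFrange : ∀ x, F x ∈ Set.Ioo (0 : ℝ) 1)
    (hGcont : Continuous G) (hGmono : StrictMono G) (hGrange : ∀ x, G x ∈ Set.Ioo (0 : ℝ) 1)
    (hFinv_left : ∀ x, Finv (F x) = x) (hFinv_right : ∀ y ∈ Set.Ioo (0 : ℝ) 1, F (Finv y) = y)
    (hGinv_left : ∀ x, Ginv (G x) = x) (hGinv_right : ∀ y ∈ Set.Ioo (0 : ℝ) 1, G (Ginv y) = y)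
    (hdisp : ∀ α β : ℝ, 0 < α → α < β → β < 1 → Ginv β - Ginv α ≤ Finv β - Finv α) :
    ∀ lam : ℝ, lam ∈ Set.Ioo (0 : ℝ) (1 / 2) →
      volume {x : ℝ | 2 * G x * (1 - G x) ≥ lam} ≤ volume {x : ℝ | 2 * F x * (1 - F x) ≥ lam} := by
  intro lam hlam
  obtain ⟨hl0, hl2⟩ := hlam
  set s := Real.sqrt (1 - 2 * lam) with hs
  have hs0 : 0 < s := Real.sqrt_pos.mpr (by linarith)
  have hs1 : s < 1 := by
    have h := Real.sqrt_lt_sqrt (by linarith) (show (1:ℝ) - 2 * lam < 1 by linarith)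
    simpa [hs, Real.sqrt_one] using h
  rw [lens_level_eq_Icc F Finv hFmono hFrange hFinv_right lam ⟨hl0, hl2⟩,
    lens_level_eq_Icc G Ginv hGmono hGrange hGinv_right lam ⟨hl0, hl2⟩]
  rw [Real.volume_Icc, Real.volume_Icc]
  exact ENNReal.ofReal_le_ofReal (by
    have := hdisp ((1 - s) / 2) ((1 + s) / 2) (by linarith) (by linarith) (by linarith)
    linarith)
end
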